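/- The settling time function S is unbounded: for every M ∈ ℕ there exists a positive integer x with S(x) > M (equivalently, limsup_{x→∞} S(x) = ∞). -/

import Mathlib

open scoped Classical

/-- The largest element of ℙ*₁ = ℙ* ∪ {1} (prime-powers together with 1) not exceeding `x`. -/
noncomputable def q (x : ℕ) : ℕ :=
  sSup {m : ℕ | (IsPrimePow m ∨ m = 1) ∧ m ≤ x}

/-- The prime-power map. -/
noncomputable def P (x : ℕ) : ℕ :=
  if x = 1 then 1
  else if IsPrimePow x then x / x.minFac
  else x - q x

/-- The orbit of `x` under `P`: `orbit x 1 = x` and `orbit x (n+1) = P (orbit x n)`. -/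
noncomputable def orbit (x n : ℕ) : ℕ := P^[n - 1] x

/-- The transient length `T x = min {n ≥ 1 : x_n = 1}`. -/
noncomputable def T (x : ℕ) : ℕ := sInf {n : ℕ | 1 ≤ n ∧ orbit x n = 1}

/-- The settling time `S x = min {n ≥ 1 : x_n ∈ ℙ*₁}`. -/
noncomputable def S (x : ℕ) : ℕ :=
  sInf {n : ℕ | 1 ≤ n ∧ (IsPrimePow (orbit x n) ∨ orbit x n = 1)}

/-!
Every positive integer `y` has a preimage under `P` that is not a prime-power: if `Q` is a
prime-power followed by at least `y` non-prime-powers, then `P (Q + y) = y`. Such gaps exist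
because `(N !)^2 + j` is not a prime-power for `2 ≤ j ≤ N`. Pulling `2` back `M` times through
non-prime-powers gives an `x` whose orbit first meets ℙ*₁ at step `M + 1`, so `S x = M + 1`.
-/

lemma not_isPrimePow_add_of_sq_dvd {F j : ℕ} (hF : 0 < F) (hj : 1 < j) (hdvd : j ^ 2 ∣ F) :
    ¬ IsPrimePow (F + j) := by
  rw [isPrimePow_nat_iff]
  rintro ⟨p, k, hp, -, hpk⟩
  -- `j ∣ p ^ k` makes `j = p ^ i`; then `p ^ (i + 1)` divides both `F` and `F + j`, hence `j`.
  have hjF : j ∣ F := (dvd_pow_self j two_ne_zero).trans hdvd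
  obtain ⟨i, -, rfl⟩ := (Nat.dvd_prime_pow hp).1 (hpk ▸ Nat.dvd_add_self_right.2 hjF)
  have hi : 1 ≤ i := Nat.one_le_iff_ne_zero.2 (by rintro rfl; simp at hj)
  have hik : i + 1 ≤ k := (Nat.pow_lt_pow_iff_right hp.one_lt).1 (by omega)
  have hF' : p ^ (i + 1) ∣ F :=
    (pow_dvd_pow p (by omega : i + 1 ≤ 2 * i)).trans (by rwa [← pow_mul, mul_comm] at hdvd)
  have hcontra : p ^ (i + 1) ∣ p ^ i :=
    (Nat.dvd_add_right hF').1 (by rw [← hpk]; exact pow_dvd_pow p hik)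
  exact absurd ((Nat.pow_dvd_pow_iff_le_right hp.one_lt).1 hcontra) (by omega)

lemma not_isPrimePow_sq_factorial_add {N j : ℕ} (hj : 1 < j) (hjN : j ≤ N) :
    ¬ IsPrimePow (N.factorial ^ 2 + j) :=
  not_isPrimePow_add_of_sq_dvd (by positivity) hj
    (pow_dvd_pow_of_dvd (Nat.dvd_factorial (by omega) hjN) 2)

lemma q_spec {x : ℕ} (hx : 1 ≤ x) : (IsPrimePow (q x) ∨ q x = 1) ∧ q x ≤ x :=
  Nat.sSup_mem (s := {m : ℕ | (IsPrimePow m ∨ m = 1) ∧ m ≤ x}) ⟨1, Or.inr rfl, hx⟩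
    ⟨x, fun _ hm => hm.2⟩

lemma le_q {x m : ℕ} (hm : IsPrimePow m ∨ m = 1) (hmx : m ≤ x) : m ≤ q x :=
  le_csSup ⟨x, fun _ hm => hm.2⟩ ⟨hm, hmx⟩

lemma q_eq_of_forall_not_isPrimePow {x m : ℕ} (hm : IsPrimePow m ∨ m = 1) (hmx : m ≤ x)
    (hgap : ∀ k, m < k → k ≤ x → ¬ IsPrimePow k) : q x = m := by
  have hm1 : 1 ≤ m := hm.elim (fun h => h.one_lt.le) (·.ge)
  obtain ⟨hq, hqx⟩ := q_spec (hm1.trans hmx)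
  refine le_antisymm ?_ (le_q hm hmx)
  by_contra! hlt
  exact hgap _ hlt hqx (hq.resolve_right (by omega))

lemma P_of_not_isPrimePow {x : ℕ} (hx : x ≠ 1) (h : ¬ IsPrimePow x) : P x = x - q x := by
  rw [P, if_neg hx, if_neg h]

lemma exists_not_isPrimePow_P_eq {y : ℕ} (hy : 0 < y) :
    ∃ x, 1 < x ∧ ¬ IsPrimePow x ∧ P x = y := by
  set F := (y + 1).factorial ^ 2
  have hF : 0 < F := by positivity
  obtain ⟨hQ, hQF⟩ := q_spec (by omega : 1 ≤ F + 1)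
  have hQ1 : 1 ≤ q (F + 1) := hQ.elim (fun h => h.one_lt.le) (·.ge)
  have hgap : ∀ k, q (F + 1) < k → k ≤ q (F + 1) + y → ¬ IsPrimePow k := by
    intro k hQk hky hk
    by_cases hkF : k ≤ F + 1
    · exact absurd (le_q (Or.inl hk) hkF) (by omega)
    · have := not_isPrimePow_sq_factorial_add (N := y + 1) (j := k - F) (by omega) (by omega)
      rw [Nat.add_sub_cancel' (by omega)] at this
      exact this hk
  have hx : ¬ IsPrimePow (q (F + 1) + y) := hgap _ (by omega) le_rfl
  refine ⟨q (F + 1) + y, by omega, hx, ?_⟩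
  rw [P_of_not_isPrimePow (by omega) hx, q_eq_of_forall_not_isPrimePow hQ (by omega) hgap]
  omega

lemma exists_iterate_P_eq_two (M : ℕ) :
    ∃ x, 0 < x ∧ (∀ n < M, ¬ (IsPrimePow (P^[n] x) ∨ P^[n] x = 1)) ∧ P^[M] x = 2 := by
  induction M with
  | zero => exact ⟨2, two_pos, fun _ h => absurd h (Nat.not_lt_zero _), rfl⟩
  | succ M ih =>
    obtain ⟨x₀, hx₀, hbefore, hM⟩ := ih
    obtain ⟨x, hx1, hx, hPx⟩ := exists_not_isPrimePow_P_eq hx₀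
    refine ⟨x, by omega, fun n hn => ?_, by rw [Function.iterate_succ_apply, hPx, hM]⟩
    cases n with
    | zero => exact fun h => h.elim hx fun h1 : x = 1 => by omega
    | succ n =>
      rw [Function.iterate_succ_apply, hPx]
      exact hbefore n (by omega)

lemma S_eq_of_iterate {x M : ℕ} (hbefore : ∀ n < M, ¬ (IsPrimePow (P^[n] x) ∨ P^[n] x = 1))
    (hM : IsPrimePow (P^[M] x) ∨ P^[M] x = 1) : S x = M + 1 := by
  refine IsLeast.csInf_eq ⟨⟨by omega, by simpa [orbit] using hM⟩, ?_⟩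
  rintro n ⟨hn, hgood⟩
  by_contra! hlt
  exact hbefore (n - 1) (by omega) hgood

theorem stmt_5 (M : ℕ) : ∃ x : ℕ, 0 < x ∧ M < S x := by
  obtain ⟨x, hx, hbefore, hM⟩ := exists_iterate_P_eq_two M
  have hS : S x = M + 1 := S_eq_of_iterate hbefore (hM ▸ Or.inl Nat.prime_two.isPrimePow)
  exact ⟨x, hx, by omega⟩
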